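/- If X is an equiangular tight frame of m > n unit vectors for R^n, then X is a Grassmannian frame and its core equals X itself; equivalently, X has no isolable vectors. -/

import Mathlib

open scoped RealInnerProductSpace
abbrev E (n : ℕ) := EuclideanSpace ℝ (Fin n)
noncomputable def coh {n : ℕ} (X : Set (E n)) : ℝ :=
  sSup {r : ℝ | ∃ x ∈ X, ∃ y ∈ X, x ≠ y ∧ r = |⟪x, y⟫|}
def IsUnitSet {n : ℕ} (X : Set (E n)) : Prop := ∀ x ∈ X, ‖x‖ = 1
def Isolated {n : ℕ} (X : Set (E n)) (x : E n) : Prop :=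
  ∀ y ∈ X, y ≠ x → |⟪x, y⟫| < coh X
def Isolable {n : ℕ} (X : Set (E n)) (x : E n) : Prop :=
  ∀ ε > 0, ∃ x' : E n, ‖x'‖ = 1 ∧ ‖x - x'‖ < ε ∧ ∀ y ∈ X, y ≠ x → |⟪x', y⟫| < coh X
def Grassmannian {n : ℕ} (m : ℕ) (X : Set (E n)) : Prop :=
  IsUnitSet X ∧ X.Finite ∧ X.ncard = m ∧
    ∀ Y : Set (E n), IsUnitSet Y → Y.Finite → Y.ncard = m → coh X ≤ coh Y
noncomputable def coreSeq {n : ℕ} (X : Set (E n)) : ℕ → Set (E n)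
  | 0 => X
  | k + 1 => coreSeq X k \ {x ∈ coreSeq X k | Isolable (coreSeq X k) x}
noncomputable def core {n : ℕ} (X : Set (E n)) : Set (E n) := ⋂ k, coreSeq X (k + 1)

/-!
The frame potential `∑ i, ∑ j, ⟪xᵢ, xⱼ⟫²` of `m` unit vectors in an `n`-dimensional space is at
least `m² / n`: by Cauchy–Schwarz, the squared trace of the frame operator is at most `n` times its
squared Frobenius norm. Tight frames attain this, and an equiangular tight frame with angle `c` has
frame potential `m + m (m - 1) c²`. Hence no `m` unit vectors can have all pairwise
`|⟪xᵢ, xⱼ⟫| ≤ c` with one vector strictly below `c` against all the others. A configuration of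
smaller coherence, or a frame vector moved off the angle `c` (an isolation of it), would be such a
family.
-/

open Finset Module

theorem sum_norm_sq_eq_card {ι V : Type*} [SeminormedAddCommGroup V] {s : Finset ι} {f : ι → V}
    (hf : ∀ i ∈ s, ‖f i‖ = 1) :
    ∑ i ∈ s, ‖f i‖ ^ 2 = #s := by
  rw [sum_congr rfl fun i hi => show ‖f i‖ ^ 2 = 1 by rw [hf i hi, one_pow]]
  simp

section FramePotential

variable {V : Type*} [NormedAddCommGroup V] [InnerProductSpace ℝ V] {ι : Type*}

noncomputable def framePotential (s : Finset ι) (f : ι → V) : ℝ := ∑ i ∈ s, ∑ j ∈ s, ⟪f i, f j⟫ ^ 2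

theorem sq_sum_norm_sq_le_finrank_mul_framePotential [FiniteDimensional ℝ V]
    (s : Finset ι) (f : ι → V) :
    (∑ i ∈ s, ‖f i‖ ^ 2) ^ 2 ≤ finrank ℝ V * framePotential s f := by
  let b := stdOrthonormalBasis ℝ V
  have hcoord (x y : V) : ⟪x, y⟫ = ∑ a, ⟪b a, x⟫ * ⟪b a, y⟫ := by
    simp_rw [← b.sum_inner_mul_inner x y, real_inner_comm x]
  -- the matrix of the frame operator `v ↦ ∑ i ∈ s, ⟪f i, v⟫ • f i` in the basis `b`
  let G a a' := ∑ i ∈ s, ⟪b a, f i⟫ * ⟪b a', f i⟫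
  have htrace : ∑ i ∈ s, ‖f i‖ ^ 2 = ∑ a, G a a := by
    simp_rw [G, ← real_inner_self_eq_norm_sq, hcoord (f _)]
    exact Finset.sum_comm
  have hpot : framePotential s f = ∑ a, ∑ a', G a a' ^ 2 := by
    simp_rw [framePotential, G, hcoord (f _), sq, Finset.sum_mul_sum]
    simp_rw [Finset.sum_comm (s := s) (t := univ)]
    exact sum_congr rfl fun _ _ => sum_congr rfl fun _ _ => sum_congr rfl fun _ _ =>
      sum_congr rfl fun _ _ => by ring
  calc (∑ i ∈ s, ‖f i‖ ^ 2) ^ 2 = (∑ a, G a a) ^ 2 := by rw [htrace]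
    _ ≤ finrank ℝ V * ∑ a, G a a ^ 2 := by
        simpa using sq_sum_le_card_mul_sum_sq (s := univ) (f := fun a => G a a)
    _ ≤ finrank ℝ V * ∑ a, ∑ a', G a a' ^ 2 := by
        gcongr with a
        exact single_le_sum (f := fun a' => G a a' ^ 2) (fun _ _ => sq_nonneg _) (mem_univ a)
    _ = finrank ℝ V * framePotential s f := by rw [hpot]

theorem framePotential_eq_mul_sum_norm_sq_of_tight {s : Finset ι} {f : ι → V} {A : ℝ}
    (htight : ∀ v, ∑ i ∈ s, ⟪f i, v⟫ • f i = A • v) :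
    framePotential s f = A * ∑ i ∈ s, ‖f i‖ ^ 2 := by
  rw [framePotential, sum_comm, mul_sum]
  refine sum_congr rfl fun j _ => ?_
  simpa only [sum_inner, real_inner_smul_left, ← sq, real_inner_self_eq_norm_sq]
    using congrArg (⟪·, f j⟫) (htight (f j))

theorem framePotential_eq_card_add [DecidableEq ι] {s : Finset ι} {f : ι → V}
    (hf : ∀ i ∈ s, ‖f i‖ = 1) :
    framePotential s f = #s + ∑ i ∈ s, ∑ j ∈ s.erase i, ⟪f i, f j⟫ ^ 2 := by
  rw [framePotential, ← sum_norm_sq_eq_card hf, ← sum_add_distrib]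
  refine sum_congr rfl fun i hi => ?_
  rw [← add_sum_erase s _ hi, real_inner_self_eq_norm_sq, hf i hi]
  norm_num

section OffDiagonal

variable [DecidableEq ι] {s : Finset ι} {f : ι → V} {c : ℝ}

theorem sum_erase_inner_sq_eq {i : ι} (hi : i ∈ s) (hc : ∀ j ∈ s, j ≠ i → |⟪f i, f j⟫| = c) :
    ∑ j ∈ s.erase i, ⟪f i, f j⟫ ^ 2 = (#s - 1 : ℕ) * c ^ 2 := by
  rw [sum_congr rfl fun j hj => by rw [← sq_abs, hc j (mem_of_mem_erase hj) (ne_of_mem_erase hj)],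
    sum_const, card_erase_of_mem hi, nsmul_eq_mul]

theorem sum_erase_inner_sq_le {i : ι} (hi : i ∈ s) (hc : ∀ j ∈ s, j ≠ i → |⟪f i, f j⟫| ≤ c) :
    ∑ j ∈ s.erase i, ⟪f i, f j⟫ ^ 2 ≤ (#s - 1 : ℕ) * c ^ 2 := by
  rw [← card_erase_of_mem hi, ← nsmul_eq_mul, ← sum_const]
  refine sum_le_sum fun j hj => ?_
  rw [← sq_abs]
  exact pow_le_pow_left₀ (abs_nonneg _) (hc j (mem_of_mem_erase hj) (ne_of_mem_erase hj)) 2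

theorem sum_erase_inner_sq_lt {i : ι} (hi : i ∈ s) (hs : 1 < #s)
    (hc : ∀ j ∈ s, j ≠ i → |⟪f i, f j⟫| < c) :
    ∑ j ∈ s.erase i, ⟪f i, f j⟫ ^ 2 < (#s - 1 : ℕ) * c ^ 2 := by
  have hne : (s.erase i).Nonempty := by
    rw [← card_pos, card_erase_of_mem hi]; omega
  rw [← card_erase_of_mem hi, ← nsmul_eq_mul, ← sum_const]
  refine sum_lt_sum_of_nonempty hne fun j hj => ?_
  rw [← sq_abs]
  exact pow_lt_pow_left₀ (hc j (mem_of_mem_erase hj) (ne_of_mem_erase hj)) (abs_nonneg _)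
    two_ne_zero

theorem framePotential_eq_of_abs_inner_eq (hf : ∀ i ∈ s, ‖f i‖ = 1)
    (hc : ∀ i ∈ s, ∀ j ∈ s, i ≠ j → |⟪f i, f j⟫| = c) :
    framePotential s f = #s + #s * ((#s - 1 : ℕ) * c ^ 2) := by
  rw [framePotential_eq_card_add hf, ← nsmul_eq_mul, ← sum_const]
  exact congrArg _ <| sum_congr rfl fun i hi =>
    sum_erase_inner_sq_eq hi fun j hj hji => hc i hi j hj hji.symm

theorem framePotential_lt_of_abs_inner_le (hf : ∀ i ∈ s, ‖f i‖ = 1) (hs : 1 < #s)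
    (hc : ∀ i ∈ s, ∀ j ∈ s, i ≠ j → |⟪f i, f j⟫| ≤ c) {i₀ : ι} (hi₀ : i₀ ∈ s)
    (hc₀ : ∀ j ∈ s, j ≠ i₀ → |⟪f i₀, f j⟫| < c) :
    framePotential s f < #s + #s * ((#s - 1 : ℕ) * c ^ 2) := by
  rw [framePotential_eq_card_add hf, ← nsmul_eq_mul, ← sum_const]
  refine add_lt_add_right
    (sum_lt_sum (fun i hi => ?_) ⟨i₀, hi₀, sum_erase_inner_sq_lt hi₀ hs hc₀⟩) _
  exact sum_erase_inner_sq_le hi fun j hj hji => hc i hi j hj hji.symm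

end OffDiagonal

structure IsEquiangularTightFrame (s : Finset V) (c : ℝ) : Prop where
  norm_eq_one : ∀ x ∈ s, ‖x‖ = 1
  tight : ∀ v, ∑ x ∈ s, ⟪x, v⟫ • x = ((#s : ℝ) / finrank ℝ V) • v
  abs_inner_eq : ∀ x ∈ s, ∀ y ∈ s, x ≠ y → |⟪x, y⟫| = c

theorem IsEquiangularTightFrame.false_of_abs_inner_le [FiniteDimensional ℝ V] {s : Finset V}
    {c : ℝ} (hs : IsEquiangularTightFrame s c) (hV : 0 < finrank ℝ V) (hs₁ : 1 < #s)
    {t : Finset ι} {f : ι → V} (hf : ∀ i ∈ t, ‖f i‖ = 1) (ht : #t = #s)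
    (hc : ∀ i ∈ t, ∀ j ∈ t, i ≠ j → |⟪f i, f j⟫| ≤ c) {i₀ : ι} (hi₀ : i₀ ∈ t)
    (hc₀ : ∀ j ∈ t, j ≠ i₀ → |⟪f i₀, f j⟫| < c) : False := by
  classical
  have hn : (0 : ℝ) < finrank ℝ V := by exact_mod_cast hV
  have htight : framePotential s id = #s / finrank ℝ V * #s := by
    rw [framePotential_eq_mul_sum_norm_sq_of_tight (f := id) hs.tight,
      sum_norm_sq_eq_card (f := id) hs.norm_eq_one]
  have hwelch := sq_sum_norm_sq_le_finrank_mul_framePotential t f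
  rw [sum_norm_sq_eq_card hf, ht] at hwelch
  have hlt := framePotential_lt_of_abs_inner_le hf (ht ▸ hs₁) hc hi₀ hc₀
  rw [ht, ← framePotential_eq_of_abs_inner_eq (f := id) hs.norm_eq_one hs.abs_inner_eq,
    htight] at hlt
  rw [div_mul_eq_mul_div, lt_div_iff₀ hn] at hlt
  nlinarith

end FramePotential

section Coherence

variable {n : ℕ}

theorem abs_inner_le_coh {X : Set (E n)} (hX : X.Finite) {x y : E n} (hx : x ∈ X) (hy : y ∈ X)
    (hxy : x ≠ y) : |⟪x, y⟫| ≤ coh X := by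
  refine le_csSup (((hX.prod hX).image fun p : E n × E n => |⟪p.1, p.2⟫|).bddAbove.mono ?_)
    ⟨x, hx, y, hy, hxy, rfl⟩
  rintro r ⟨x, hx, y, hy, -, rfl⟩
  exact ⟨(x, y), ⟨hx, hy⟩, rfl⟩

theorem coh_eq_of_abs_inner_eq {X : Set (E n)} {c : ℝ} (hX : X.Nontrivial)
    (hc : ∀ x ∈ X, ∀ y ∈ X, x ≠ y → |⟪x, y⟫| = c) : coh X = c := by
  obtain ⟨x, hx, y, hy, hxy⟩ := hX
  have : {r : ℝ | ∃ x ∈ X, ∃ y ∈ X, x ≠ y ∧ r = |⟪x, y⟫|} = {c} := by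
    refine Set.eq_singleton_iff_unique_mem.2 ⟨⟨x, hx, y, hy, hxy, (hc x hx y hy hxy).symm⟩, ?_⟩
    rintro r ⟨x, hx, y, hy, hxy, rfl⟩
    exact hc x hx y hy hxy
  rw [coh, this, csSup_singleton]

theorem coreSeq_eq_self_of_forall_not_isolable {X : Set (E n)} (h : ∀ x ∈ X, ¬Isolable X x)
    (k : ℕ) : coreSeq X k = X := by
  induction k with
  | zero => rfl
  | succ k ih =>
    rw [coreSeq, ih, Set.sep_eq_empty_iff_mem_false.2 h, Set.sdiff_empty]

theorem core_eq_self_of_forall_not_isolable {X : Set (E n)} (h : ∀ x ∈ X, ¬Isolable X x) :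
    core X = X := by
  simp only [core, coreSeq_eq_self_of_forall_not_isolable h, Set.iInter_const]

end Coherence

namespace IsEquiangularTightFrame

variable {n : ℕ} {s : Finset (E n)} {c : ℝ}

theorem coh_eq (hs : IsEquiangularTightFrame s c) (hs₁ : 1 < #s) : coh (s : Set (E n)) = c :=
  coh_eq_of_abs_inner_eq (one_lt_card_iff_nontrivial.1 hs₁) hs.abs_inner_eq

theorem le_coh (hs : IsEquiangularTightFrame s c) (hn : 0 < n) (hs₁ : 1 < #s) {Y : Set (E n)}
    (hY : IsUnitSet Y) (hYfin : Y.Finite) (hYcard : Y.ncard = #s) : c ≤ coh Y := by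
  by_contra! hYc
  have ht : #hYfin.toFinset = #s := by rw [← hYcard, Set.ncard_eq_toFinset_card Y hYfin]
  have hlt : ∀ x ∈ hYfin.toFinset, ∀ y ∈ hYfin.toFinset, x ≠ y → |⟪x, y⟫| < c := by
    intro x hx y hy hxy
    rw [Set.Finite.mem_toFinset] at hx hy
    exact (abs_inner_le_coh hYfin hx hy hxy).trans_lt hYc
  obtain ⟨y₀, hy₀⟩ : hYfin.toFinset.Nonempty := by rw [← card_pos, ht]; omega
  exact hs.false_of_abs_inner_le (by rwa [finrank_euclideanSpace_fin]) hs₁ (f := id)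
    (fun y hy => hY y (hYfin.mem_toFinset.1 hy)) ht
    (fun x hx y hy hxy => (hlt x hx y hy hxy).le) hy₀
    (fun y hy hyy₀ => hlt y₀ hy₀ y hy hyy₀.symm)

theorem grassmannian (hs : IsEquiangularTightFrame s c) (hn : 0 < n) (hs₁ : 1 < #s) :
    Grassmannian #s (s : Set (E n)) :=
  ⟨hs.norm_eq_one, s.finite_toSet, Set.ncard_coe_finset s, fun _ hY hYfin hYcard =>
    (hs.coh_eq hs₁).trans_le (hs.le_coh hn hs₁ hY hYfin hYcard)⟩

theorem not_isolable (hs : IsEquiangularTightFrame s c) (hn : 0 < n) (hs₁ : 1 < #s) {x : E n}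
    (hx : x ∈ s) : ¬Isolable s x := by
  classical
  intro hiso
  obtain ⟨x', hx'_norm, -, hx'⟩ := hiso 1 one_pos
  simp only [Finset.mem_coe, hs.coh_eq hs₁] at hx'
  let g := Function.update id x x'
  have hg_norm : ∀ y ∈ s, ‖g y‖ = 1 := by
    intro y hy
    rcases eq_or_ne y x with rfl | hyx
    · simpa [g] using hx'_norm
    · simpa [g, hyx] using hs.norm_eq_one y hy
  have hg_row : ∀ y ∈ s, y ≠ x → |⟪g x, g y⟫| < c := by
    intro y hy hyx
    simpa [g, hyx] using hx' y hy hyx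
  have hg : ∀ y ∈ s, ∀ z ∈ s, y ≠ z → |⟪g y, g z⟫| ≤ c := by
    intro y hy z hz hyz
    rcases eq_or_ne y x with rfl | hyx
    · exact (hg_row z hz hyz.symm).le
    rcases eq_or_ne z x with rfl | hzx
    · rw [real_inner_comm]; exact (hg_row y hy hyz).le
    · simpa [g, hyx, hzx] using (hs.abs_inner_eq y hy z hz hyz).le
  exact hs.false_of_abs_inner_le (by rwa [finrank_euclideanSpace_fin]) hs₁ hg_norm rfl hg hx hg_row

end IsEquiangularTightFrame

theorem etf_core_eq_self {n m : ℕ} (X : Set (E n))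
    (hmn : n < m) (hn : 0 < n)
    (hfin : X.Finite) (hcard : X.ncard = m) (hunit : IsUnitSet X)
    (htight : ∀ v : E n, ∑ x ∈ hfin.toFinset, ⟪x, v⟫ • x = ((m : ℝ) / n) • v)
    (hequi : ∃ c : ℝ, ∀ x ∈ X, ∀ y ∈ X, x ≠ y → |⟪x, y⟫| = c) :
    Grassmannian m X ∧ core X = X ∧ ∀ x ∈ X, ¬ Isolable X x := by
  obtain ⟨c, hc⟩ := hequi
  have hX : (hfin.toFinset : Set (E n)) = X := hfin.coe_toFinset
  have hs : #hfin.toFinset = m := by rw [← hcard, Set.ncard_eq_toFinset_card X hfin]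
  have hs₁ : 1 < #hfin.toFinset := by omega
  have hetf : IsEquiangularTightFrame hfin.toFinset c :=
    ⟨fun x hx => hunit x (hfin.mem_toFinset.1 hx),
      fun v => by rw [hs, finrank_euclideanSpace_fin]; exact htight v,
      fun x hx y hy => hc x (hfin.mem_toFinset.1 hx) y (hfin.mem_toFinset.1 hy)⟩
  have hni : ∀ x ∈ X, ¬Isolable X x := fun x hx =>
    hX ▸ hetf.not_isolable hn hs₁ (hfin.mem_toFinset.2 hx)
  have hgrass := hetf.grassmannian hn hs₁
  rw [hs, hX] at hgrass
  exact ⟨hgrass, core_eq_self_of_forall_not_isolable hni, hni⟩
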